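/- arXiv:2312.13678 — 2 statements merged into one kernel-verified Lean document; each statement's English description precedes it below -/
import Mathlib

section
/- Let u, v ∈ H¹₀(U) ∩ H¹(U) on a bounded open set U, with w = u − v satisfying, weakly, Δw = χ_{A∩{u>0}} − χ_{B∩{v>0}} where u, v ≥ 0. Then for every λ > 0, ∫_U |∇w₊|² λ²/(λ² + w²)^{3/2} dx + ∫_U (χ_{A∩{u>0}} − χ_{B∩{v>0}}) w₊/(λ² + w²)^{1/2} dx = 0, and consequently ∫_U (χ_{A∩{u>0}} − χ_{B∩{v>0}}) χ_{{u>v}} dx ≤ 0. -/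
open MeasureTheory Set Filter Topology intervalIntegral
open scoped RealInnerProductSpace

/-!
The function `w₊/(λ² + w²)^{1/2}` is not differentiable where `w = 0`, so we test instead with
`ψₙ(w)`, where `ψₙ(t) = ∫₀ᵗ ψ'(s) θₙ(s) ds`, `ψ'(s) = λ²/(λ² + s²)^{3/2}` is the derivative of
`s/(λ² + s²)^{1/2}` and the ramp `θₙ` rises from `0` at `s = 0` to `1` at `s = 1/n`.
Since `∇w · ∇(ψₙ ∘ w) = |∇w|² ψ'(w) θₙ(w)` increases with `n` to `|∇w|² ψ'(w) χ_{w>0}`, the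
gradient term converges by monotone convergence, while `ψₙ → t₊/(λ² + t²)^{1/2}` boundedly, so
the other term converges by dominated convergence. As `λ → 0` the profile tends to `χ_{t>0}`,
and the gradient term is nonnegative.
-/

noncomputable section

def testProfile (l t : ℝ) : ℝ := max t 0 / Real.sqrt (l ^ 2 + t ^ 2)

def testProfileDeriv (l t : ℝ) : ℝ := l ^ 2 / (l ^ 2 + t ^ 2) ^ ((3:ℝ)/2)

def ramp (n : ℕ) (s : ℝ) : ℝ := max 0 (min 1 (n * s))

def smoothTestProfile (l : ℝ) (n : ℕ) (t : ℝ) : ℝ :=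
  ∫ s in 0..t, testProfileDeriv l s * ramp n s

end

section Profile

variable {l : ℝ}

lemma rpow_three_halves {S : ℝ} (hS : 0 ≤ S) : S ^ ((3:ℝ)/2) = S * Real.sqrt S := by
  rw [Real.sqrt_eq_rpow, show (3:ℝ)/2 = 1 + 1/2 by norm_num, Real.rpow_add' hS (by norm_num),
    Real.rpow_one]

lemma hasDerivAt_div_sqrt (hl : 0 < l) (t : ℝ) :
    HasDerivAt (fun t => t / Real.sqrt (l ^ 2 + t ^ 2)) (testProfileDeriv l t) t := by
  have hS : 0 < l ^ 2 + t ^ 2 := by positivity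
  have hsqrt := ((hasDerivAt_pow 2 t).const_add (l ^ 2)).sqrt hS.ne'
  refine ((hasDerivAt_id' t).div hsqrt (Real.sqrt_pos.2 hS).ne').congr_deriv ?_
  rw [testProfileDeriv, rpow_three_halves hS.le]
  field_simp
  rw [Real.sq_sqrt hS.le]
  ring

lemma continuous_testProfileDeriv (hl : 0 < l) : Continuous (testProfileDeriv l) :=
  continuous_const.div (by fun_prop (disch := norm_num))
    fun t => (Real.rpow_pos_of_pos (by positivity) _).ne'

lemma testProfileDeriv_nonneg (l t : ℝ) : 0 ≤ testProfileDeriv l t := by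
  unfold testProfileDeriv; positivity

lemma integral_testProfileDeriv (hl : 0 < l) (t : ℝ) :
    ∫ s in 0..t, testProfileDeriv l s = t / Real.sqrt (l ^ 2 + t ^ 2) := by
  rw [integral_eq_sub_of_hasDerivAt (fun s _ => hasDerivAt_div_sqrt hl s)
    ((continuous_testProfileDeriv hl).intervalIntegrable _ _)]
  simp

lemma testProfile_of_nonpos {t : ℝ} (ht : t ≤ 0) : testProfile l t = 0 := by
  simp [testProfile, max_eq_right ht]

lemma testProfile_of_nonneg {t : ℝ} (ht : 0 ≤ t) :
    testProfile l t = t / Real.sqrt (l ^ 2 + t ^ 2) := by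
  rw [testProfile, max_eq_left ht]

lemma continuous_testProfile (hl : 0 < l) : Continuous (testProfile l) :=
  (continuous_id.max continuous_const).div (by fun_prop)
    fun t => (Real.sqrt_pos.2 (by positivity)).ne'

lemma testProfile_nonneg (l t : ℝ) : 0 ≤ testProfile l t := by
  unfold testProfile; positivity

lemma testProfile_le_one (l t : ℝ) : testProfile l t ≤ 1 := by
  refine div_le_one_of_le₀ ?_ (Real.sqrt_nonneg _)
  calc max t 0 ≤ |t| := max_le (le_abs_self t) (abs_nonneg t)
    _ = Real.sqrt (t ^ 2) := (Real.sqrt_sq_eq_abs t).symm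
    _ ≤ Real.sqrt (l ^ 2 + t ^ 2) := Real.sqrt_le_sqrt (by nlinarith)

lemma tendsto_testProfile_nhdsGT_zero (t : ℝ) :
    Tendsto (fun l => testProfile l t) (𝓝[>] 0) (𝓝 ((Ioi (0:ℝ)).indicator (fun _ => (1:ℝ)) t)) := by
  rcases le_or_gt t 0 with ht | ht
  · simp only [testProfile_of_nonpos ht]
    rw [indicator_of_notMem (show t ∉ Ioi (0:ℝ) from not_lt.2 ht)]
    exact tendsto_const_nhds
  · rw [indicator_of_mem (mem_Ioi.2 ht)]
    have hcont : ContinuousAt (fun l => testProfile l t) 0 := by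
      unfold testProfile; fun_prop (disch := exact (Real.sqrt_pos.2 (by positivity)).ne')
    convert hcont.tendsto.mono_left nhdsWithin_le_nhds using 2
    simp [testProfile, max_eq_left ht.le, Real.sqrt_sq ht.le, ht.ne']

end Profile

section Ramp

lemma continuous_ramp (n : ℕ) : Continuous (ramp n) := by
  unfold ramp; fun_prop

lemma ramp_nonneg (n : ℕ) (s : ℝ) : 0 ≤ ramp n s := le_max_left _ _

lemma ramp_le_one (n : ℕ) (s : ℝ) : ramp n s ≤ 1 := max_le zero_le_one (min_le_left _ _)

lemma ramp_of_nonpos (n : ℕ) {s : ℝ} (hs : s ≤ 0) : ramp n s = 0 :=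
  max_eq_left ((min_le_right _ _).trans (mul_nonpos_of_nonneg_of_nonpos n.cast_nonneg hs))

lemma monotone_ramp (s : ℝ) : Monotone fun n => ramp n s := by
  intro n m hnm
  rcases le_or_gt s 0 with hs | hs
  · simp only [ramp_of_nonpos _ hs, le_refl]
  · exact max_le_max le_rfl (min_le_min le_rfl
      (mul_le_mul_of_nonneg_right (by exact_mod_cast hnm) hs.le))

lemma tendsto_ramp {s : ℝ} (hs : 0 < s) : Tendsto (fun n => ramp n s) atTop (𝓝 1) := by
  refine tendsto_const_nhds.congr' ?_
  filter_upwards [eventually_ge_atTop ⌈s⁻¹⌉₊] with n hn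
  have : 1 ≤ (n : ℝ) * s := by
    rw [← inv_mul_cancel₀ hs.ne']
    exact mul_le_mul_of_nonneg_right ((Nat.le_ceil _).trans (by exact_mod_cast hn)) hs.le
  simp [ramp, min_eq_left this]

end Ramp

section SmoothTestProfile

variable {l : ℝ}

lemma continuous_testProfileDeriv_mul_ramp (hl : 0 < l) (n : ℕ) :
    Continuous fun s => testProfileDeriv l s * ramp n s :=
  (continuous_testProfileDeriv hl).mul (continuous_ramp n)

lemma hasDerivAt_smoothTestProfile (hl : 0 < l) (n : ℕ) (t : ℝ) :
    HasDerivAt (smoothTestProfile l n) (testProfileDeriv l t * ramp n t) t :=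
  let h := continuous_testProfileDeriv_mul_ramp hl n
  integral_hasDerivAt_right (h.intervalIntegrable _ _) (h.stronglyMeasurableAtFilter _ _)
    h.continuousAt

lemma differentiable_smoothTestProfile (hl : 0 < l) (n : ℕ) :
    Differentiable ℝ (smoothTestProfile l n) :=
  fun t => (hasDerivAt_smoothTestProfile hl n t).differentiableAt

lemma smoothTestProfile_of_nonpos (n : ℕ) {t : ℝ} (ht : t ≤ 0) : smoothTestProfile l n t = 0 := by
  rw [smoothTestProfile, integral_congr (g := fun _ => 0), intervalIntegral.integral_zero]
  intro s hs
  rw [uIcc_of_ge ht] at hs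
  simp [ramp_of_nonpos n hs.2]

lemma smoothTestProfile_nonneg (n : ℕ) (t : ℝ) : 0 ≤ smoothTestProfile l n t := by
  rcases le_or_gt t 0 with ht | ht
  · rw [smoothTestProfile_of_nonpos n ht]
  · exact integral_nonneg ht.le fun s _ =>
      mul_nonneg (testProfileDeriv_nonneg l s) (ramp_nonneg n s)

lemma smoothTestProfile_le_testProfile (hl : 0 < l) (n : ℕ) (t : ℝ) :
    smoothTestProfile l n t ≤ testProfile l t := by
  rcases le_or_gt t 0 with ht | ht
  · rw [smoothTestProfile_of_nonpos n ht, testProfile_of_nonpos ht]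
  · rw [testProfile_of_nonneg ht.le, ← integral_testProfileDeriv hl]
    refine integral_mono_on ht.le
      ((continuous_testProfileDeriv_mul_ramp hl n).intervalIntegrable _ _)
      ((continuous_testProfileDeriv hl).intervalIntegrable _ _) fun s _ => ?_
    exact mul_le_of_le_one_right (testProfileDeriv_nonneg l s) (ramp_le_one n s)

lemma tendsto_smoothTestProfile (hl : 0 < l) (t : ℝ) :
    Tendsto (fun n => smoothTestProfile l n t) atTop (𝓝 (testProfile l t)) := by
  rcases le_or_gt t 0 with ht | ht
  · simp only [smoothTestProfile_of_nonpos _ ht, testProfile_of_nonpos ht]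
    exact tendsto_const_nhds
  rw [testProfile_of_nonneg ht.le, ← integral_testProfileDeriv hl]
  refine tendsto_integral_filter_of_dominated_convergence (testProfileDeriv l)
    (Eventually.of_forall fun n =>
      (continuous_testProfileDeriv_mul_ramp hl n).aestronglyMeasurable)
    (Eventually.of_forall fun n => Eventually.of_forall fun s _ => ?_)
    ((continuous_testProfileDeriv hl).intervalIntegrable _ _)
    (Eventually.of_forall fun s hs => ?_)
  · rw [Real.norm_of_nonneg (mul_nonneg (testProfileDeriv_nonneg l s) (ramp_nonneg n s))]
    exact mul_le_of_le_one_right (testProfileDeriv_nonneg l s) (ramp_le_one n s)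
  · rw [uIoc_of_le ht.le] at hs
    simpa using (tendsto_ramp hs.1).const_mul (testProfileDeriv l s)

end SmoothTestProfile

theorem HasDerivAt.comp_hasGradientAt {E : Type*} [NormedAddCommGroup E] [InnerProductSpace ℝ E]
    [CompleteSpace E] {f : E → ℝ} {f' : E} {g : ℝ → ℝ} {g' : ℝ} {x : E}
    (hg : HasDerivAt g g' (f x)) (hf : HasGradientAt f f' x) :
    HasGradientAt (g ∘ f) (g' • f') x := by
  rw [hasGradientAt_iff_hasFDerivAt, map_smul]
  exact hg.comp_hasFDerivAt x hf.hasFDerivAt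

namespace MeasureTheory

variable {α : Type*} [MeasurableSpace α] {μ : Measure α}

/-- No integrability is assumed: if some `f n` is not integrable, then neither are the later
ones nor `F`, and all these Bochner integrals are `0`. -/
theorem integral_eq_of_monotone_of_tendsto_integral {f : ℕ → α → ℝ} {F : α → ℝ} {L : ℝ}
    (hf : ∀ n, AEStronglyMeasurable (f n) μ) (hf_nonneg : ∀ n, 0 ≤ᵐ[μ] f n)
    (h_mono : ∀ᵐ x ∂μ, Monotone fun n => f n x)
    (h_tendsto : ∀ᵐ x ∂μ, Tendsto (fun n => f n x) atTop (𝓝 (F x)))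
    (hL : Tendsto (fun n => ∫ x, f n x ∂μ) atTop (𝓝 L)) :
    ∫ x, F x ∂μ = L := by
  have hF : AEStronglyMeasurable F μ := aestronglyMeasurable_of_tendsto_ae _ hf h_tendsto
  have hf_le : ∀ n, ∀ᵐ x ∂μ, ‖f n x‖ ≤ F x := fun n => by
    filter_upwards [hf_nonneg n, h_mono, h_tendsto] with x h0 hm ht
    exact (Real.norm_of_nonneg h0).trans_le (hm.ge_of_tendsto ht n)
  by_cases hint : ∀ n, Integrable (f n) μ
  · have hF_nonneg : 0 ≤ᵐ[μ] F := by
      filter_upwards [hf_nonneg 0, hf_le 0] with x h0 hle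
      exact h0.trans ((Real.norm_of_nonneg h0).symm.trans_le hle)
    have hlint : Tendsto (fun n => ENNReal.ofReal (∫ x, f n x ∂μ)) atTop
        (𝓝 (∫⁻ x, ENNReal.ofReal (F x) ∂μ)) := by
      simp_rw [ofReal_integral_eq_lintegral_ofReal (hint _) (hf_nonneg _)]
      refine lintegral_tendsto_of_tendsto_of_monotone (fun n => (hf n).aemeasurable.ennreal_ofReal)
        ?_ ?_
      · filter_upwards [h_mono] with x hx n m hnm using ENNReal.ofReal_le_ofReal (hx hnm)
      · filter_upwards [h_tendsto] with x hx using (ENNReal.continuous_ofReal.tendsto _).comp hx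
    have hL_nonneg : 0 ≤ L :=
      ge_of_tendsto' hL fun n => integral_nonneg_of_ae (hf_nonneg n)
    rw [integral_eq_lintegral_of_nonneg_ae hF_nonneg hF,
      tendsto_nhds_unique hlint ((ENNReal.continuous_ofReal.tendsto L).comp hL),
      ENNReal.toReal_ofReal hL_nonneg]
  · obtain ⟨n₀, hn₀⟩ := not_forall.1 hint
    have hnot : ∀ n ≥ n₀, ¬Integrable (f n) μ := fun n hn hfn =>
      hn₀ (hfn.mono' (hf n₀) (by
        filter_upwards [hf_nonneg n₀, h_mono] with x h0 hm
        exact (Real.norm_of_nonneg h0).trans_le (hm hn)))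
    have hL0 : L = 0 := tendsto_nhds_unique hL (tendsto_const_nhds.congr' (by
      filter_upwards [eventually_ge_atTop n₀] with n hn using (integral_undef (hnot n hn)).symm))
    rw [hL0, integral_undef fun hFint => hn₀ (hFint.mono' (hf n₀) (hf_le n₀))]

end MeasureTheory

theorem tendsto_integral_mul_testProfile {α : Type*} [MeasurableSpace α] {μ : Measure α}
    {w c : α → ℝ} (hw : AEStronglyMeasurable w μ) (hc : Integrable c μ) :
    Tendsto (fun l => ∫ x, c x * testProfile l (w x) ∂μ) (𝓝[>] 0)
      (𝓝 (∫ x, c x * {x | 0 < w x}.indicator (fun _ => (1:ℝ)) x ∂μ)) := by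
  refine tendsto_integral_filter_of_dominated_convergence (fun x => ‖c x‖)
    ?_ (Eventually.of_forall fun l => Eventually.of_forall fun x => ?_) hc.norm
    (Eventually.of_forall fun x => (tendsto_testProfile_nhdsGT_zero (w x)).const_mul (c x))
  · filter_upwards [self_mem_nhdsWithin] with l hl
    exact hc.1.mul ((continuous_testProfile hl).comp_aestronglyMeasurable hw)
  · rw [norm_mul, Real.norm_of_nonneg (testProfile_nonneg l _)]
    exact mul_le_of_le_one_right (norm_nonneg _) (testProfile_le_one l _)

section WeakSolution

variable {E : Type*} [NormedAddCommGroup E] [InnerProductSpace ℝ E] [CompleteSpace E]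
  [MeasurableSpace E] [BorelSpace E] {μ : Measure E} {w c : E → ℝ}

theorem measurable_gradient (f : E → ℝ) : Measurable (gradient f) :=
  (InnerProductSpace.toDual ℝ E).symm.continuous.measurable.comp (measurable_fderiv ℝ f)

theorem integral_gradient_sq_mul_testProfileDeriv_add_integral_mul_testProfile
    (hw : Differentiable ℝ w) (hc : Integrable c μ)
    (hweak : ∀ g : ℝ → ℝ, Differentiable ℝ g → g 0 = 0 →
      (∫ x, ⟪gradient w x, gradient (g ∘ w) x⟫ ∂μ) + ∫ x, c x * g (w x) ∂μ = 0)
    {l : ℝ} (hl : 0 < l) :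
    (∫ x in {x | 0 < w x}, ‖gradient w x‖ ^ 2 * testProfileDeriv l (w x) ∂μ) +
      ∫ x, c x * testProfile l (w x) ∂μ = 0 := by
  set f : ℕ → E → ℝ := fun n x => ‖gradient w x‖ ^ 2 * (testProfileDeriv l (w x) * ramp n (w x))
  have hf_eq : ∀ n, ∫ x, f n x ∂μ = -∫ x, c x * smoothTestProfile l n (w x) ∂μ := fun n => by
    have h := hweak _ (differentiable_smoothTestProfile hl n) (smoothTestProfile_of_nonpos n le_rfl)
    have hgrad : ∀ x, ⟪gradient w x, gradient (smoothTestProfile l n ∘ w) x⟫ = f n x := fun x => by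
      rw [((hasDerivAt_smoothTestProfile hl n (w x)).comp_hasGradientAt
          (hw x).hasGradientAt).gradient, real_inner_smul_right, real_inner_self_eq_norm_sq]
      ring
    simp only [hgrad] at h
    linarith
  have hlim : Tendsto (fun n => ∫ x, c x * smoothTestProfile l n (w x) ∂μ) atTop
      (𝓝 (∫ x, c x * testProfile l (w x) ∂μ)) := by
    refine tendsto_integral_filter_of_dominated_convergence (fun x => ‖c x‖)
      (Eventually.of_forall fun n => hc.1.mul ((differentiable_smoothTestProfile hl n).continuous.comp
        hw.continuous).aestronglyMeasurable)
      (Eventually.of_forall fun n => Eventually.of_forall fun x => ?_) hc.norm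
      (Eventually.of_forall fun x => (tendsto_smoothTestProfile hl (w x)).const_mul (c x))
    rw [norm_mul]
    refine mul_le_of_le_one_right (norm_nonneg _) ?_
    rw [Real.norm_of_nonneg (smoothTestProfile_nonneg n _)]
    exact (smoothTestProfile_le_testProfile hl n _).trans (testProfile_le_one l _)
  have hS : MeasurableSet {x | 0 < w x} :=
    measurableSet_lt measurable_const hw.continuous.measurable
  rw [← MeasureTheory.integral_indicator hS, integral_eq_of_monotone_of_tendsto_integral (f := f)
    (fun n => ((measurable_gradient w).norm.pow_const 2).mul
      (((continuous_testProfileDeriv hl).comp hw.continuous).measurable.mul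
        ((continuous_ramp n).comp hw.continuous).measurable) |>.aestronglyMeasurable)
    (fun n => Eventually.of_forall fun x => ?_)
    (Eventually.of_forall fun x n m hnm => ?_) (Eventually.of_forall fun x => ?_)
    ((tendsto_congr hf_eq).2 hlim.neg)]
  · ring
  · exact mul_nonneg (sq_nonneg _) (mul_nonneg (testProfileDeriv_nonneg l _) (ramp_nonneg n _))
  · exact mul_le_mul_of_nonneg_left (mul_le_mul_of_nonneg_left (monotone_ramp _ hnm)
      (testProfileDeriv_nonneg l _)) (sq_nonneg _)
  · rcases lt_or_ge 0 (w x) with hx | hx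
    · rw [indicator_of_mem (show x ∈ {x | 0 < w x} from hx)]
      simpa using ((tendsto_ramp hx).const_mul _).const_mul _
    · rw [indicator_of_notMem (show x ∉ {x | 0 < w x} from not_lt.2 hx)]
      simp [f, ramp_of_nonpos _ hx]

end WeakSolution

theorem stmt8_general {N : ℕ} (U A B : Set (EuclideanSpace ℝ (Fin N)))
    (hUb : Bornology.IsBounded U)
    (hAm : MeasurableSet A) (hBm : MeasurableSet B)
    (u v : EuclideanSpace ℝ (Fin N) → ℝ)
    (hud : Differentiable ℝ u) (hvd : Differentiable ℝ v)
    -- `u − v ∈ H¹₀(U)`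
    (hbd : ∀ x, x ∉ U → u x = v x)
    -- weak formulation of `Δ(u−v) = χ_{A∩{u>0}} − χ_{B∩{v>0}}`, for test
    -- functions vanishing outside `U` (the class of `H¹₀(U)` functions)
    (hweak : ∀ φ : EuclideanSpace ℝ (Fin N) → ℝ, (∀ x, x ∉ U → φ x = 0) →
      Differentiable ℝ φ →
      (∫ x in U, ⟪gradient (fun y => u y - v y) x, gradient φ x⟫) +
        ∫ x in U, (indicator (A ∩ {x | 0 < u x}) (fun _ => (1:ℝ)) x -
          indicator (B ∩ {x | 0 < v x}) (fun _ => (1:ℝ)) x) * φ x = 0) :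
    (∀ l : ℝ, 0 < l →
      (∫ x in U ∩ {x | 0 < u x - v x},
          ‖gradient (fun y => u y - v y) x‖ ^ 2 *
            (l ^ 2 / ((l ^ 2 + (u x - v x) ^ 2) ^ ((3:ℝ)/2)))) +
        ∫ x in U, (indicator (A ∩ {x | 0 < u x}) (fun _ => (1:ℝ)) x -
            indicator (B ∩ {x | 0 < v x}) (fun _ => (1:ℝ)) x) *
          (max (u x - v x) 0 / Real.sqrt (l ^ 2 + (u x - v x) ^ 2)) = 0) ∧
    (∫ x in U, (indicator (A ∩ {x | 0 < u x}) (fun _ => (1:ℝ)) x -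
        indicator (B ∩ {x | 0 < v x}) (fun _ => (1:ℝ)) x) *
      indicator {x | v x < u x} (fun _ => (1:ℝ)) x) ≤ 0 := by
  have hwd : Differentiable ℝ fun y => u y - v y := hud.sub hvd
  have : IsFiniteMeasure (volume.restrict U) := isFiniteMeasure_restrict.2 hUb.measure_lt_top.ne
  have hc : Integrable (fun x => indicator (A ∩ {x | 0 < u x}) (fun _ => (1:ℝ)) x -
      indicator (B ∩ {x | 0 < v x}) (fun _ => (1:ℝ)) x) (volume.restrict U) :=
    ((integrable_const 1).indicator
      (hAm.inter (measurableSet_lt measurable_const hud.continuous.measurable))).sub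
    ((integrable_const 1).indicator
      (hBm.inter (measurableSet_lt measurable_const hvd.continuous.measurable)))
  have hS : MeasurableSet {x | 0 < u x - v x} :=
    measurableSet_lt measurable_const hwd.continuous.measurable
  have key (l : ℝ) (hl : 0 < l) := by
    have h := integral_gradient_sq_mul_testProfileDeriv_add_integral_mul_testProfile hwd hc
      (fun g hg hg0 => hweak _ (fun x hx => by simp [Function.comp, hbd x hx, hg0]) (hg.comp hwd))
      hl
    rwa [Measure.restrict_restrict hS, inter_comm] at h
  refine ⟨key, ?_⟩
  have hset : {x | v x < u x} = {x | 0 < u x - v x} := by simp only [sub_pos]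
  rw [hset]
  refine le_of_tendsto (tendsto_integral_mul_testProfile hwd.continuous.aestronglyMeasurable hc) ?_
  filter_upwards [self_mem_nhdsWithin] with l hl
  have hgrad_nonneg : 0 ≤ ∫ x in U ∩ {x | 0 < u x - v x},
      ‖gradient (fun y => u y - v y) x‖ ^ 2 * testProfileDeriv l (u x - v x) :=
    integral_nonneg fun x => mul_nonneg (sq_nonneg _) (testProfileDeriv_nonneg l _)
  linarith [key l hl]

/-- Testing the equation for `w = u − v` with `w₊/(λ² + w²)^{1/2}` yields an
integral identity for each `λ > 0`, and in the limit `λ → 0` the inequality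
`∫ (χ_{A∩{u>0}} − χ_{B∩{v>0}}) χ_{{u>v}} ≤ 0`. -/
theorem stmt8 {N : ℕ} (U A B : Set (EuclideanSpace ℝ (Fin N)))
    (hU : IsOpen U) (hUb : Bornology.IsBounded U)
    (hAm : MeasurableSet A) (hBm : MeasurableSet B)
    (u v : EuclideanSpace ℝ (Fin N) → ℝ)
    (hud : Differentiable ℝ u) (hvd : Differentiable ℝ v)
    (hu0 : ∀ x, 0 ≤ u x) (hv0 : ∀ x, 0 ≤ v x)
    -- `u − v ∈ H¹₀(U)`
    (hbd : ∀ x, x ∉ U → u x = v x)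
    -- weak formulation of `Δ(u−v) = χ_{A∩{u>0}} − χ_{B∩{v>0}}`, for test
    -- functions vanishing outside `U` (the class of `H¹₀(U)` functions)
    (hweak : ∀ φ : EuclideanSpace ℝ (Fin N) → ℝ, (∀ x, x ∉ U → φ x = 0) →
      Differentiable ℝ φ →
      (∫ x in U, ⟪gradient (fun y => u y - v y) x, gradient φ x⟫) +
        ∫ x in U, (indicator (A ∩ {x | 0 < u x}) (fun _ => (1:ℝ)) x -
          indicator (B ∩ {x | 0 < v x}) (fun _ => (1:ℝ)) x) * φ x = 0) :
    (∀ l : ℝ, 0 < l →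
      (∫ x in U ∩ {x | 0 < u x - v x},
          ‖gradient (fun y => u y - v y) x‖ ^ 2 *
            (l ^ 2 / ((l ^ 2 + (u x - v x) ^ 2) ^ ((3:ℝ)/2)))) +
        ∫ x in U, (indicator (A ∩ {x | 0 < u x}) (fun _ => (1:ℝ)) x -
            indicator (B ∩ {x | 0 < v x}) (fun _ => (1:ℝ)) x) *
          (max (u x - v x) 0 / Real.sqrt (l ^ 2 + (u x - v x) ^ 2)) = 0) ∧
    (∫ x in U, (indicator (A ∩ {x | 0 < u x}) (fun _ => (1:ℝ)) x -
        indicator (B ∩ {x | 0 < v x}) (fun _ => (1:ℝ)) x) *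
      indicator {x | v x < u x} (fun _ => (1:ℝ)) x) ≤ 0 :=
  stmt8_general U A B hUb hAm hBm u v hud hvd hbd hweak
end

section
/- Let F : [0,∞) → [0,∞) be a nondecreasing function satisfying F(R) ≤ K R^{N/2} and F(R) ≤ (K/R) F(2R) for all R > 0 and some constant K > 0. Then F ≡ 0. -/
/-!
Each application of `F R ≤ (K / R) F (2R)` trades a power bound `F R ≤ C R^a` for
`F R ≤ C' R^(a-1)`, so `N + 1` of them turn the growth bound `K R^(N/2)` into a decay bound
with negative exponent. Monotonicity gives `F R ≤ F x` for every `x ≥ R`, and letting `x → ∞`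
forces `F R ≤ 0`.
-/

open Set Filter

lemma le_mul_rpow_sub_one_of_doubling {F : ℝ → ℝ} {K C a : ℝ} (hK : 0 ≤ K)
    (hdoub : ∀ R, 0 < R → F R ≤ (K / R) * F (2 * R))
    (hC : ∀ R, 0 < R → F R ≤ C * R ^ a) :
    ∀ R, 0 < R → F R ≤ K * C * 2 ^ a * R ^ (a - 1) := by
  intro R hR
  calc F R ≤ (K / R) * F (2 * R) := hdoub R hR
    _ ≤ (K / R) * (C * (2 * R) ^ a) := by gcongr; exact hC _ (by positivity)
    _ = K * C * 2 ^ a * R ^ (a - 1) := by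
      rw [Real.mul_rpow zero_le_two hR.le, Real.rpow_sub_one hR.ne']
      ring

lemma exists_le_mul_rpow_sub_of_doubling {F : ℝ → ℝ} {K C a : ℝ} (hK : 0 ≤ K)
    (hdoub : ∀ R, 0 < R → F R ≤ (K / R) * F (2 * R))
    (hC : ∀ R, 0 < R → F R ≤ C * R ^ a) (k : ℕ) :
    ∃ C' : ℝ, ∀ R, 0 < R → F R ≤ C' * R ^ (a - k) := by
  induction k with
  | zero => exact ⟨C, by simpa using hC⟩
  | succ k ih =>
    obtain ⟨C', hC'⟩ := ih
    refine ⟨K * C' * 2 ^ (a - k), fun R hR => ?_⟩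
    have := le_mul_rpow_sub_one_of_doubling hK hdoub hC' R hR
    rwa [sub_sub, ← Nat.cast_add_one] at this

lemma nonpos_of_monotoneOn_of_le_mul_rpow {F : ℝ → ℝ} {C b : ℝ} (hb : b < 0)
    (hmono : MonotoneOn F (Ici 0)) (hC : ∀ R, 0 < R → F R ≤ C * R ^ b) :
    ∀ R, 0 ≤ R → F R ≤ 0 := by
  intro R hR
  have hdecay : Tendsto (fun x : ℝ => C * x ^ b) atTop (nhds 0) := by
    simpa using (tendsto_rpow_neg_atTop (neg_pos.mpr hb)).const_mul C
  refine ge_of_tendsto hdecay ?_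
  filter_upwards [eventually_ge_atTop R, eventually_gt_atTop 0] with x hRx hx
  exact (hmono hR (hR.trans hRx) hRx).trans (hC x hx)

theorem stmt12_general (N : ℕ) (K : ℝ) (hK : 0 < K) (F : ℝ → ℝ)
    (hmono : MonotoneOn F (Ici 0)) (hpos : ∀ R, 0 ≤ R → 0 ≤ F R)
    (h1 : ∀ R, 0 < R → F R ≤ K * R ^ ((N : ℝ) / 2))
    (h2 : ∀ R, 0 < R → F R ≤ (K / R) * F (2 * R)) :
    ∀ R, 0 ≤ R → F R = 0 := by
  obtain ⟨C, hC⟩ := exists_le_mul_rpow_sub_of_doubling hK.le h2 h1 (N + 1)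
  have hexp : (N : ℝ) / 2 - (N + 1 : ℕ) < 0 := by push_cast; linarith [N.cast_nonneg (α := ℝ)]
  intro R hR
  exact le_antisymm (nonpos_of_monotoneOn_of_le_mul_rpow hexp hmono hC R hR) (hpos R hR)

/-- Abstract decay lemma: a nondecreasing `F : [0,∞) → [0,∞)` with
`F(R) ≤ K R^{N/2}` and `F(R) ≤ (K/R) F(2R)` vanishes identically. -/
theorem stmt12 (N : ℕ) (hN : 1 ≤ N) (K : ℝ) (hK : 0 < K) (F : ℝ → ℝ)
    (hmono : MonotoneOn F (Ici 0)) (hpos : ∀ R, 0 ≤ R → 0 ≤ F R)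
    (h1 : ∀ R, 0 < R → F R ≤ K * R ^ ((N : ℝ) / 2))
    (h2 : ∀ R, 0 < R → F R ≤ (K / R) * F (2 * R)) :
    ∀ R, 0 ≤ R → F R = 0 :=
  stmt12_general N K hK F hmono hpos h1 h2
end
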